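/- Let r ∈ (0, 1/2) and s ∈ (1/2, 1) be real numbers, and consider the triangle in the Euclidean plane ℝ² with vertices x_m = (0, 0), e₁ = (r − 1, −s) and x₂ = (1 − r, −s). Then each of the three interior angles of this triangle (the angle at x_m between e₁ and x₂, the angle at e₁ between x_m and x₂, and the angle at x₂ between e₁ and x_m) is strictly less than 3π/4 (i.e. 135°). -/

import Mathlib

/-!
The triangle is isosceles with apex at the origin, so its base angles are acute: at either base
vertex the two edge vectors have inner product `2 (1 - r)² > 0`. The apex angle has cosine
`(s² - (1 - r)²) / (s² + (1 - r)²) > (1/4 - 1) / (1/4 + 1) = -3/5 > -√2/2 = cos (3π/4)`.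
-/

open EuclideanGeometry

/-- The point `(a, b)` in the Euclidean plane `ℝ²`. -/
noncomputable def pt2 (a b : ℝ) : EuclideanSpace ℝ (Fin 2) :=
  (WithLp.equiv 2 (Fin 2 → ℝ)).symm ![a, b]

theorem Real.arccos_lt_three_pi_div_four {x : ℝ} :
    Real.arccos x < 3 * Real.pi / 4 ↔ -(√2 / 2) < x := by
  rw [← not_le, ← neg_neg x, Real.arccos_neg, neg_neg, neg_lt, ← not_le, not_iff_not,
    ← Real.arccos_le_pi_div_four]
  constructor <;> intro h <;> linarith

namespace InnerProductGeometry

variable {V : Type*} [NormedAddCommGroup V] [InnerProductSpace ℝ V] {x y : V}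

theorem angle_lt_pi_div_two_of_inner_pos (h : 0 < inner ℝ x y) : angle x y < Real.pi / 2 :=
  Real.arccos_lt_pi_div_two.2 (div_pos h (h.trans_le (real_inner_le_norm x y)))

theorem angle_lt_three_pi_div_four_of_inner (h : -(√2 / 2) * (‖x‖ * ‖y‖) < inner ℝ x y) :
    angle x y < 3 * Real.pi / 4 := by
  have hxy : 0 < ‖x‖ * ‖y‖ := by
    nlinarith [real_inner_le_norm x y, Real.sqrt_nonneg 2]
  rw [angle, Real.arccos_lt_three_pi_div_four, lt_div_iff₀ hxy]
  exact h

end InnerProductGeometry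

@[simp]
lemma pt2_sub (a b c d : ℝ) : pt2 a b - pt2 c d = pt2 (a - c) (b - d) := by
  ext i
  fin_cases i <;> simp [pt2]

@[simp]
lemma inner_pt2 (a b c d : ℝ) : inner ℝ (pt2 a b) (pt2 c d) = a * c + b * d := by
  simp [pt2, PiLp.inner_apply, Fin.sum_univ_two, mul_comm]

@[simp]
lemma norm_pt2 (a b : ℝ) : ‖pt2 a b‖ = √(a ^ 2 + b ^ 2) := by
  simp [pt2, EuclideanSpace.norm_eq, Fin.sum_univ_two]

lemma angle_pt2_sub_one_pt2_one_sub_lt {r s : ℝ} (hr₀ : 0 < r) (hr₁ : r < 1) (hs : 1 / 2 < s) :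
    InnerProductGeometry.angle (pt2 (r - 1) (-s)) (pt2 (1 - r) (-s)) < 3 * Real.pi / 4 := by
  apply InnerProductGeometry.angle_lt_three_pi_div_four_of_inner
  have hnorm : ‖pt2 (r - 1) (-s)‖ * ‖pt2 (1 - r) (-s)‖ = (1 - r) ^ 2 + s ^ 2 := by
    rw [norm_pt2, norm_pt2, show (r - 1) ^ 2 + (-s) ^ 2 = (1 - r) ^ 2 + (-s) ^ 2 by ring, neg_sq,
      Real.mul_self_sqrt (by positivity)]
  have hsqrt : (0.7 : ℝ) < √2 / 2 := by
    rw [lt_div_iff₀ two_pos, Real.lt_sqrt (by norm_num)]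
    norm_num
  have hX : 0 < (1 - r) ^ 2 + s ^ 2 := by positivity
  rw [hnorm, inner_pt2]
  nlinarith [mul_lt_mul_of_pos_right hsqrt hX]

/-- For `r ∈ (0, 1/2)` and `s ∈ (1/2, 1)`, each interior angle of the triangle with
vertices `x_m = (0,0)`, `e₁ = (r − 1, −s)` and `x₂ = (1 − r, −s)` is strictly less
than `3π/4`. -/
theorem stmt2 (r s : ℝ) (hr : r ∈ Set.Ioo (0 : ℝ) (1 / 2))
    (hs : s ∈ Set.Ioo (1 / 2 : ℝ) 1)
    (xm e₁ x₂ : EuclideanSpace ℝ (Fin 2))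
    (hxm : xm = pt2 0 0) (he₁ : e₁ = pt2 (r - 1) (-s)) (hx₂ : x₂ = pt2 (1 - r) (-s)) :
    ∠ e₁ xm x₂ < 3 * Real.pi / 4 ∧
    ∠ xm e₁ x₂ < 3 * Real.pi / 4 ∧
    ∠ e₁ x₂ xm < 3 * Real.pi / 4 := by
  subst hxm he₁ hx₂
  have hr₁ : r < 1 := by linarith [hr.2]
  have h_right_lt : Real.pi / 2 < 3 * Real.pi / 4 := by linarith [Real.pi_pos]
  simp only [angle, vsub_eq_sub, pt2_sub, sub_zero]
  refine ⟨angle_pt2_sub_one_pt2_one_sub_lt hr.1 hr₁ hs.1, ?_, ?_⟩ <;>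
    refine (InnerProductGeometry.angle_lt_pi_div_two_of_inner_pos ?_).trans h_right_lt <;>
    rw [inner_pt2] <;> nlinarith
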